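/- arXiv:2006.11028 — 2 statements merged into one kernel-verified Lean document; each statement's English description precedes it below -/
import Mathlib

section
/- Let d : ℝ → ℝ be an additive function and let α, β ∈ ℝ satisfy either 0 < 2α < β or α < 2β < 0. If d(coth(x)) = -(1/sinh²(x))·d(x) holds for all x ∈ (α, β), then d is a standard derivation. -/
/-!
By the doubling formula `coth 2x = (coth x + tanh x) / 2`, the hypothesis at `x` and at `2x`
gives `d (1 / u) = -d u / u ^ 2` for every `u = coth x` with `x, 2x ∈ (α, β)`; these `u` fill
a nondegenerate interval of positive reals. An additive map is `ℚ`-linear, and the relation is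
invariant under rational scaling of `u`, so it holds for all `u`. Applying `d` to
`1 / (x - 1) - 1 / x = 1 / (x ^ 2 - x)` then gives `d (x ^ 2) = 2 x d x`, and polarization
gives the Leibniz rule. The case `α < 2β < 0` reduces to `0 < 2α < β` because `coth` and `sinh` are odd.
-/

open Real Set

lemma Real.cosh_div_sinh_lt_cosh_div_sinh {a b : ℝ} (ha : 0 < a) (hab : a < b) :
    cosh b / sinh b < cosh a / sinh a := by
  have hsa : 0 < sinh a := sinh_pos_iff.2 ha
  have hsb : 0 < sinh b := sinh_pos_iff.2 (ha.trans hab)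
  have hdiff : cosh a * sinh b - cosh b * sinh a = sinh (b - a) := by rw [sinh_sub]; ring
  rw [div_lt_div_iff₀ hsb hsa, ← sub_pos, hdiff]
  exact sinh_pos_iff.2 (sub_pos.2 hab)

namespace AddMonoidHom

variable (f : ℝ →+ ℝ)

lemma map_ratCast_mul (q : ℚ) (x : ℝ) : f (q * x) = q * f x := by
  simpa only [smul_eq_mul] using map_ratCast_smul f ℝ ℝ q x

lemma map_cosh_div_sinh_neg {α β : ℝ}
    (h : ∀ x ∈ Ioo α β, f (cosh x / sinh x) = -(1 / sinh x ^ 2) * f x) :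
    ∀ x ∈ Ioo (-β) (-α), f (cosh x / sinh x) = -(1 / sinh x ^ 2) * f x := by
  intro x hx
  have := h (-x) ⟨by linarith [hx.2], by linarith [hx.1]⟩
  rw [cosh_neg, sinh_neg, div_neg, map_neg, map_neg, neg_sq] at this
  linarith

lemma map_inv_cosh_div_sinh {x : ℝ} (hx : x ≠ 0)
    (h₁ : f (cosh x / sinh x) = -(1 / sinh x ^ 2) * f x)
    (h₂ : f (cosh (2 * x) / sinh (2 * x)) = -(1 / sinh (2 * x) ^ 2) * f (2 * x)) :
    f (cosh x / sinh x)⁻¹ = -f (cosh x / sinh x) / (cosh x / sinh x) ^ 2 := by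
  have hs : sinh x ≠ 0 := sinh_ne_zero.2 hx
  have hc : cosh x ≠ 0 := (cosh_pos x).ne'
  have hdouble : cosh (2 * x) / sinh (2 * x)
      = (1 / 2 : ℚ) * (cosh x / sinh x + (cosh x / sinh x)⁻¹) := by
    rw [cosh_two_mul, sinh_two_mul]; push_cast; field_simp
  have htanh : f (cosh x / sinh x)⁻¹ = f x / cosh x ^ 2 := by
    rw [hdouble, map_ratCast_mul, map_add, h₁, sinh_two_mul, two_mul x, map_add] at h₂
    field_simp at h₂
    push_cast at h₂
    rw [inv_div, eq_div_iff (pow_ne_zero 2 hc)]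
    apply mul_right_cancel₀ (pow_ne_zero 2 hs)
    linear_combination (1 / 2) * h₂ + f x * cosh_sq_sub_sinh_sq x
  rw [htanh, h₁]
  field_simp

lemma map_inv_ratCast_mul {u : ℝ} (hu : f u⁻¹ = -f u / u ^ 2) (q : ℚ) :
    f (q * u)⁻¹ = -f (q * u) / (q * u) ^ 2 := by
  rcases eq_or_ne (q : ℝ) 0 with hq | hq
  · simp [hq]
  rw [mul_inv, ← Rat.cast_inv, map_ratCast_mul, map_ratCast_mul, hu]
  push_cast
  field_simp

lemma map_inv_of_forall_mem_Ioo {A B : ℝ} (hA : 0 < A) (hAB : A < B)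
    (h : ∀ u ∈ Ioo A B, f u⁻¹ = -f u / u ^ 2) (s : ℝ) : f s⁻¹ = -f s / s ^ 2 := by
  have hpos : ∀ s, 0 < s → f s⁻¹ = -f s / s ^ 2 := by
    intro s hs
    obtain ⟨q, hq₁, hq₂⟩ := exists_rat_btwn (div_lt_div_of_pos_left hs hA hAB)
    have hq : (0 : ℝ) < q := (div_pos hs (hA.trans hAB)).trans hq₁
    have hmem : s / q ∈ Ioo A B :=
      ⟨(lt_div_iff₀ hq).2 (by rwa [lt_div_iff₀ hA, mul_comm] at hq₂),
        (div_lt_iff₀ hq).2 (by rwa [div_lt_iff₀ (hA.trans hAB), mul_comm] at hq₁)⟩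
    simpa only [mul_div_cancel₀ s hq.ne'] using map_inv_ratCast_mul f (h _ hmem) q
  rcases lt_trichotomy s 0 with hs | rfl | hs
  · simpa using map_inv_ratCast_mul f (hpos (-s) (neg_pos.2 hs)) (-1)
  · simp
  · exact hpos s hs

lemma map_inv_of_map_cosh_div_sinh {α β : ℝ} (hα : 0 < α) (hαβ : 2 * α < β)
    (h : ∀ x ∈ Ioo α β, f (cosh x / sinh x) = -(1 / sinh x ^ 2) * f x) (u : ℝ) :
    f u⁻¹ = -f u / u ^ 2 := by
  have hcont : ContinuousOn (fun x ↦ cosh x / sinh x) (Icc α (β / 2)) :=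
    continuous_cosh.continuousOn.div continuous_sinh.continuousOn
      fun x hx ↦ (sinh_pos_iff.2 (hα.trans_le hx.1)).ne'
  refine map_inv_of_forall_mem_Ioo f (div_pos (cosh_pos (β / 2)) (sinh_pos_iff.2 (by linarith)))
    (cosh_div_sinh_lt_cosh_div_sinh (b := β / 2) hα (by linarith)) ?_ u
  intro v hv
  obtain ⟨x, ⟨hx₁, hx₂⟩, rfl⟩ := intermediate_value_Ioo' (by linarith) hcont hv
  exact map_inv_cosh_div_sinh f (by linarith) (h x ⟨hx₁, by linarith⟩)
    (h (2 * x) ⟨by linarith, by linarith⟩)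

lemma map_sq_of_map_inv (h : ∀ u, f u⁻¹ = -f u / u ^ 2) (x : ℝ) :
    f (x ^ 2) = 2 * x * f x := by
  have h1 : f 1 = 0 := by
    have h1 := h 1
    rw [inv_one, one_pow, div_one] at h1
    linarith
  rcases eq_or_ne x 0 with rfl | hx0
  · simp
  rcases eq_or_ne x 1 with rfl | hx1
  · simp [h1]
  have hx1' : x - 1 ≠ 0 := sub_ne_zero.2 hx1
  have hxx : x ^ 2 - x ≠ 0 := by
    rw [sq, ← mul_sub_one]; exact mul_ne_zero hx0 hx1'
  have hpartial : (x - 1)⁻¹ - x⁻¹ = (x ^ 2 - x)⁻¹ := by field_simp; ring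
  have hf := congrArg f hpartial
  rw [map_sub, h, h, h, map_sub, map_sub, h1, sub_zero] at hf
  field_simp at hf
  linear_combination hf

lemma map_mul_of_map_sq (h : ∀ x, f (x ^ 2) = 2 * x * f x) (x y : ℝ) :
    f (x * y) = f x * y + x * f y := by
  have hxy := h (x + y)
  rw [add_sq, map_add, map_add, h x, h y, mul_assoc 2 x y, two_mul (x * y), map_add, map_add] at hxy
  linear_combination hxy / 2

end AddMonoidHom

/-- If an additive function `d` derivates `coth = cosh / sinh` on `(α, β)` with
`0 < 2α < β` or `α < 2β < 0`, then `d` is a standard derivation. -/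
theorem stmt_12 (d : ℝ → ℝ) (hd : ∀ x y : ℝ, d (x + y) = d x + d y)
    (α β : ℝ) (hαβ : (0 < 2 * α ∧ 2 * α < β) ∨ (α < 2 * β ∧ 2 * β < 0))
    (h : ∀ x ∈ Set.Ioo α β,
      d (Real.cosh x / Real.sinh x) = -(1 / (Real.sinh x) ^ 2) * d x) :
    ∀ x y : ℝ, d (x * y) = d x * y + x * d y := by
  let f : ℝ →+ ℝ := AddMonoidHom.mk' d hd
  have hinv : ∀ u, f u⁻¹ = -f u / u ^ 2 := by
    rcases hαβ with ⟨hα, hαβ⟩ | ⟨hαβ, hβ⟩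
    · exact f.map_inv_of_map_cosh_div_sinh (by linarith) hαβ h
    · exact f.map_inv_of_map_cosh_div_sinh (by linarith) (by linarith)
        (f.map_cosh_div_sinh_neg h)
  exact f.map_mul_of_map_sq (f.map_sq_of_map_inv hinv)
end

section
/- Let d : ℝ → ℝ be an additive function and let α, β ∈ ℝ satisfy -π < 2α < β and α < 2β < π. If d(tan(x)) = (1/cos²(x))·d(x) holds for all x ∈ (α, β) (where cos(x) ≠ 0), then d is a standard derivation. -/
/-!
In the variable `a = tan x` the hypothesis reads `d (arctan a) = d a / (1 + a ^ 2)`. Since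
`arctan a + arctan b = arctan ((a + b) / (1 - a * b))`, additivity of `d` yields the identity
`(1 - a b)² d ((a + b) / (1 - a b)) = (1 + b²) d a + (1 + a²) d b` for `a, b` in an open set.
Taking `a = b = u` rational forces `d 1 = 0`, so `d` vanishes on `ℚ`; fixing `b = u` rational
then gives the reciprocal rule `d w⁻¹ = -d w / w²` on an open set, and `ℚ`-homogeneity together
with the density of `ℚ` spreads it to all of `ℝ`. Finally Hua's identity
`(x - x²)⁻¹ = x⁻¹ + (1 - x)⁻¹` gives `d (x²) = 2 x d x`, and polarization gives the Leibniz rule.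
-/

open Real Set

section Field

variable {K : Type*} [Field K] [NeZero (2 : K)] (d : K →+ K)

theorem map_sq_of_map_inv (h : ∀ t, d t⁻¹ = -d t / t ^ 2) (x : K) : d (x ^ 2) = 2 * x * d x := by
  have d1 : d 1 = 0 := by
    have h1 := h 1
    simp only [inv_one, one_pow, div_one] at h1
    have : (2 : K) * d 1 = 0 := by linear_combination h1
    simpa [two_ne_zero] using this
  rcases eq_or_ne x 0 with rfl | hx0
  · simp
  rcases eq_or_ne x 1 with rfl | hx1
  · simp [d1]
  have h1x : 1 - x ≠ 0 := sub_ne_zero.mpr hx1.symm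
  have hua : (x - x ^ 2)⁻¹ = x⁻¹ + (1 - x)⁻¹ := by
    rw [show x - x ^ 2 = x * (1 - x) by ring]
    field_simp
    ring
  have key := congrArg d hua
  rw [map_add, h, h, h, map_sub, map_sub, d1, show x - x ^ 2 = x * (1 - x) by ring] at key
  field_simp at key
  linear_combination key

theorem map_mul_of_map_inv (h : ∀ t, d t⁻¹ = -d t / t ^ 2) (x y : K) :
    d (x * y) = d x * y + x * d y := by
  have hxy := map_sq_of_map_inv d h (x + y)
  rw [add_sq, map_add, map_add, map_sq_of_map_inv d h, map_sq_of_map_inv d h, map_add,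
    show 2 * x * y = x * y + x * y by ring, map_add] at hxy
  have : (2 : K) * (d (x * y) - (d x * y + x * d y)) = 0 := by linear_combination hxy
  simpa [two_ne_zero, sub_eq_zero] using this

end Field

theorem map_ratCast_mul {K : Type*} [DivisionRing K] [CharZero K] (d : K →+ K) (q : ℚ) (x : K) :
    d (q * x) = q * d x := by
  simpa only [smul_eq_mul] using map_ratCast_smul d K K q x

theorem exists_ratCast_ne_zero_mem {U : Set ℝ} (hU : IsOpen U) (hne : U.Nonempty) :
    ∃ q : ℚ, q ≠ 0 ∧ (q : ℝ) ∈ U := by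
  have hdense : Dense (range ((↑) : ℚ → ℝ) \ {0}) := Rat.denseRange_cast.sdiff_singleton 0
  obtain ⟨_, ⟨⟨q, rfl⟩, hq0⟩, hqU⟩ := hdense.exists_mem_open hU hne
  exact ⟨q, by simpa using hq0, hqU⟩

section Reciprocal

variable (d : ℝ →+ ℝ)

theorem map_inv_ratCast_mul {y : ℝ} (hy : d y⁻¹ = -d y / y ^ 2) (q : ℚ) :
    d (q * y)⁻¹ = -d (q * y) / (q * y) ^ 2 := by
  rcases eq_or_ne q 0 with rfl | hq
  · simp
  have hq' : (q : ℝ) ≠ 0 := Rat.cast_ne_zero.mpr hq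
  rw [mul_inv, ← Rat.cast_inv, map_ratCast_mul, hy, map_ratCast_mul, Rat.cast_inv]
  field_simp

theorem map_inv_of_isOpen {U : Set ℝ} (hU : IsOpen U) (hne : U.Nonempty)
    (h : ∀ y ∈ U, d y⁻¹ = -d y / y ^ 2) (t : ℝ) : d t⁻¹ = -d t / t ^ 2 := by
  rcases eq_or_ne t 0 with rfl | ht
  · simp
  obtain ⟨y, hy⟩ := hne
  have hV : IsOpen ((t * ·) ⁻¹' U) := hU.preimage (continuous_const_mul t)
  obtain ⟨q, hq, hqV⟩ := exists_ratCast_ne_zero_mem hV ⟨y / t, by simp [mul_div_cancel₀ y ht, hy]⟩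
  have := map_inv_ratCast_mul d (h (t * q) hqV) q⁻¹
  rwa [Rat.cast_inv, mul_comm t, inv_mul_cancel_left₀ (Rat.cast_ne_zero.mpr hq)] at this

end Reciprocal

section TangentAddition

variable {d : ℝ →+ ℝ} {U : Set ℝ}

theorem map_one_eq_zero_of_tan_add (hU : IsOpen U) (hne : U.Nonempty)
    (hT : ∀ a ∈ U, ∀ b ∈ U, 1 - a * b ≠ 0 ∧
      (1 - a * b) ^ 2 * d ((a + b) / (1 - a * b)) = (1 + b ^ 2) * d a + (1 + a ^ 2) * d b) :
    d 1 = 0 := by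
  obtain ⟨u, hu0, huU⟩ := exists_ratCast_ne_zero_mem hU hne
  obtain ⟨hden, heq⟩ := hT u huU u huU
  have hrat (q : ℚ) : d q = q * d 1 := by simpa using map_ratCast_mul d q 1
  rw [show ((u : ℝ) + u) / (1 - u * u) = (((u + u) / (1 - u * u) : ℚ) : ℝ) by push_cast; rfl,
    hrat, hrat] at heq
  push_cast at heq
  field_simp at heq
  have hu0' : (u : ℝ) ^ 2 ≠ 0 := pow_ne_zero 2 (Rat.cast_ne_zero.mpr hu0)
  have : 2 * (u : ℝ) ^ 2 * d 1 = 0 := by linear_combination -heq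
  simpa [hu0'] using this

theorem map_inv_of_tan_add (hU : IsOpen U) (hne : U.Nonempty)
    (hT : ∀ a ∈ U, ∀ b ∈ U, 1 - a * b ≠ 0 ∧
      (1 - a * b) ^ 2 * d ((a + b) / (1 - a * b)) = (1 + b ^ 2) * d a + (1 + a ^ 2) * d b)
    (t : ℝ) : d t⁻¹ = -d t / t ^ 2 := by
  have d1 := map_one_eq_zero_of_tan_add hU hne hT
  obtain ⟨u, hu0, huU⟩ := exists_ratCast_ne_zero_mem hU hne
  have hu0' : (u : ℝ) ≠ 0 := Rat.cast_ne_zero.mpr hu0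
  have hdu : d u = 0 := by rw [← mul_one (u : ℝ), map_ratCast_mul, d1, mul_zero]
  -- Pairing with the fixed rational point `u`, the identity turns into the reciprocal rule
  -- at `w = 1 - a * u`.
  have hV : IsOpen ((fun w : ℝ ↦ (1 - w) / (u : ℝ)) ⁻¹' U) := hU.preimage (by fun_prop)
  refine map_inv_of_isOpen d hV ⟨1 - u * u, by simpa [hu0'] using huU⟩ (fun w hw ↦ ?_) t
  set a := (1 - w) / u
  have hwa : 1 - a * u = w := by simp only [a]; field_simp; ring
  obtain ⟨hw0, heq⟩ := hT a hw u huU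
  rw [hwa, hdu, mul_zero, add_zero] at heq
  rw [hwa] at hw0
  have hsum : (a + u) / w = (((1 + u ^ 2) / u : ℚ) : ℝ) * w⁻¹ - (u⁻¹ : ℚ) * 1 := by
    push_cast; simp only [a]; field_simp; ring
  have ha : a = ((u⁻¹ : ℚ) : ℝ) * (1 - w) := by simp only [a]; push_cast; ring
  rw [hsum, map_sub, map_ratCast_mul, map_ratCast_mul, d1, ha, map_ratCast_mul, map_sub, d1]
    at heq
  push_cast at heq
  have hc : (1 + (u : ℝ) ^ 2) / u ≠ 0 := div_ne_zero (by positivity) hu0'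
  rw [eq_div_iff (pow_ne_zero 2 hw0)]
  exact mul_left_cancel₀ hc (by linear_combination heq)

end TangentAddition

theorem one_sub_mul_pos_of_arctan_add_mem_Ioo {a b : ℝ}
    (h : arctan a + arctan b ∈ Ioo (-(π / 2)) (π / 2)) : 0 < 1 - a * b := by
  have hcos : cos (arctan a + arctan b) = (1 - a * b) / (√(1 + a ^ 2) * √(1 + b ^ 2)) := by
    rw [cos_add, cos_arctan, cos_arctan, sin_arctan, sin_arctan]
    ring
  have := cos_pos_of_mem_Ioo h
  rwa [hcos, div_pos_iff_of_pos_right (by positivity)] at this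

theorem map_tan_add_of_map_arctan (d : ℝ →+ ℝ) {I : Set ℝ} (hI : I ⊆ Ioo (-(π / 2)) (π / 2))
    (hR : ∀ t, arctan t ∈ I → d t = (1 + t ^ 2) * d (arctan t)) {a b : ℝ}
    (ha : arctan a ∈ I) (hb : arctan b ∈ I) (hab : arctan a + arctan b ∈ I) :
    1 - a * b ≠ 0 ∧
      (1 - a * b) ^ 2 * d ((a + b) / (1 - a * b)) = (1 + b ^ 2) * d a + (1 + a ^ 2) * d b := by
  have hpos := one_sub_mul_pos_of_arctan_add_mem_Ioo (hI hab)
  have hc : arctan ((a + b) / (1 - a * b)) = arctan a + arctan b :=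
    (arctan_add (by linarith)).symm
  have hdc := hR _ (hc ▸ hab)
  rw [hc, map_add] at hdc
  refine ⟨hpos.ne', ?_⟩
  rw [hdc, hR a ha, hR b hb]
  field_simp
  ring

/-- If an additive function `d` derivates `tan` on `(α, β)` (wherever `cos` does not
vanish) with `-π < 2α < β` and `α < 2β < π`, then `d` is a standard derivation. -/
theorem stmt_15 (d : ℝ → ℝ) (hd : ∀ x y : ℝ, d (x + y) = d x + d y)
    (α β : ℝ) (h1 : -Real.pi < 2 * α) (h2 : 2 * α < β)
    (h3 : α < 2 * β) (h4 : 2 * β < Real.pi)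
    (h : ∀ x ∈ Set.Ioo α β, Real.cos x ≠ 0 →
      d (Real.tan x) = (1 / (Real.cos x) ^ 2) * d x) :
    ∀ x y : ℝ, d (x * y) = d x * y + x * d y := by
  set D : ℝ →+ ℝ := AddMonoidHom.mk' d hd
  have hR (t : ℝ) (ht : arctan t ∈ Ioo α β) : D t = (1 + t ^ 2) * D (arctan t) := by
    have := h _ ht (cos_arctan_pos t).ne'
    rwa [tan_arctan, cos_sq_arctan, one_div_one_div] at this
  have hI : Ioo α β ⊆ Ioo (-(π / 2)) (π / 2) := Ioo_subset_Ioo (by linarith) (by linarith)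
  -- Angles in `(m, M)` have pairwise sums in `(α, β)`.
  set m := max α (α / 2)
  set M := min β (β / 2)
  have hmM : m < M :=
    max_lt (lt_min (by linarith) (by linarith)) (lt_min (by linarith) (by linarith))
  set U := arctan ⁻¹' Ioo m M
  have hU : IsOpen U := isOpen_Ioo.preimage continuous_arctan
  have hne : U.Nonempty := by
    have hm : α ≤ m := le_max_left _ _
    have hM : M ≤ β := min_le_left _ _
    refine ⟨tan ((m + M) / 2), ?_⟩
    rw [mem_preimage, arctan_tan (by linarith) (by linarith)]
    constructor <;> linarith
  have hT : ∀ a ∈ U, ∀ b ∈ U, 1 - a * b ≠ 0 ∧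
      (1 - a * b) ^ 2 * D ((a + b) / (1 - a * b)) = (1 + b ^ 2) * D a + (1 + a ^ 2) * D b := by
    intro a ha b hb
    simp only [U, m, M, mem_preimage, mem_Ioo, max_lt_iff, lt_min_iff] at ha hb
    exact map_tan_add_of_map_arctan D hI hR ⟨by linarith, by linarith⟩ ⟨by linarith, by linarith⟩
      ⟨by linarith, by linarith⟩
  exact map_mul_of_map_inv D (map_inv_of_tan_add hU hne hT)
end
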